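/- arXiv:1907.01846 — 4 statements merged into one kernel-verified Lean document; each statement's English description precedes it below -/
import Mathlib

section
/- Let p ≥ 1, κ, θ, ν, Y₀, T > 0, n ∈ ℕ with n ≥ 1, and let B : [0, T] → ℝ be a bounded function with B(0) = 0. Put tₖ = kT/n, Δₙ = T/n, ΔB_{k+1} = B(t_{k+1}) − B(tₖ), and define Ŷ₀ = Y₀ and recursively Ŷ_{k+1} = (Ŷₖ + (ν/2)ΔB_{k+1} + √((Ŷₖ + (ν/2)ΔB_{k+1})² + κΔₙ(2 + θΔₙ)))/(2 + θΔₙ). Then for every k with 1 ≤ k ≤ n: (Ŷₖ)^p ≤ ((4Y₀)^p + (8κT/Y₀)^p + (8ν)^p · sup_{s∈[0,T]}|B(s)|^p) + (8θ)^p · T^{p−1} · Σ_{j=1}^{k} (Ŷ_j)^p · Δₙ. -/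
/-- One step of the inverse (drift-implicit) Euler scheme. -/
noncomputable def invEulerStep (κ θ ν Δ y b : ℝ) : ℝ :=
  (y + ν / 2 * b + Real.sqrt ((y + ν / 2 * b) ^ 2 + κ * Δ * (2 + θ * Δ))) / (2 + θ * Δ)

/-- The inverse Euler approximations `Ŷₖ` on the equidistant partition `tₖ = kT/n`
of `[0,T]`, driven by the increments of `B`, started from `Y₀`. -/
noncomputable def invEulerSeq (κ θ ν Y₀ T : ℝ) (n : ℕ) (B : ℝ → ℝ) : ℕ → ℝ
  | 0 => Y₀
  | k + 1 =>
      invEulerStep κ θ ν (T / n) (invEulerSeq κ θ ν Y₀ T n B k)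
        (B (((k : ℝ) + 1) * T / n) - B ((k : ℝ) * T / n))

lemma invEulerStep_pos (κ θ ν Δ y b : ℝ) (hκ : 0 < κ) (hθ : 0 ≤ θ) (hΔ : 0 < Δ) :
    0 < invEulerStep κ θ ν Δ y b := by
  unfold invEulerStep
  set a := y + ν / 2 * b with ha
  have hc : 0 < κ * Δ * (2 + θ * Δ) := by positivity
  have hs : |a| < Real.sqrt (a ^ 2 + κ * Δ * (2 + θ * Δ)) := by
    rw [← Real.sqrt_sq_eq_abs]
    exact Real.sqrt_lt_sqrt (sq_nonneg a) (by linarith)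
  have hd : (0:ℝ) < 2 + θ * Δ := by positivity
  apply div_pos _ hd
  linarith [neg_abs_le a]

lemma invEulerStep_eq (κ θ ν Δ y b x : ℝ) (hκ : 0 < κ) (hθ : 0 ≤ θ) (hΔ : 0 < Δ)
    (hy : y = invEulerStep κ θ ν Δ x b) :
    y = x + ν / 2 * b + Δ * (κ / (2 * y) - θ / 2 * y) := by
  have hy0 : 0 < y := hy ▸ invEulerStep_pos κ θ ν Δ x b hκ hθ hΔ
  set a := x + ν / 2 * b with ha
  have hd : (0:ℝ) < 2 + θ * Δ := by positivity
  have hkey : (2 + θ * Δ) * y = a + Real.sqrt (a ^ 2 + κ * Δ * (2 + θ * Δ)) := by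
    rw [hy, invEulerStep, mul_div_cancel₀ _ hd.ne']
  have hsq : ((2 + θ * Δ) * y - a) ^ 2 = a ^ 2 + κ * Δ * (2 + θ * Δ) := by
    rw [show (2 + θ * Δ) * y - a = Real.sqrt (a ^ 2 + κ * Δ * (2 + θ * Δ)) from by linarith]
    exact Real.sq_sqrt (by positivity)
  have h2 : (2 + θ * Δ) * ((2 + θ * Δ) * y ^ 2 - 2 * a * y - κ * Δ) = 0 := by
    linear_combination hsq
  have h3 : (2 + θ * Δ) * y ^ 2 - 2 * a * y - κ * Δ = 0 :=
    (mul_eq_zero.mp h2).resolve_left hd.ne'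
  field_simp
  nlinarith [h3, hy0]

lemma invEulerSeq_pos (κ θ ν Y₀ T : ℝ) (n : ℕ) (B : ℝ → ℝ) (hκ : 0 < κ) (hθ : 0 ≤ θ)
    (hY₀ : 0 < Y₀) (hΔ : 0 < T / n) : ∀ k, 0 < invEulerSeq κ θ ν Y₀ T n B k
  | 0 => hY₀
  | k + 1 => invEulerStep_pos _ _ _ _ _ _ hκ hθ hΔ

set_option maxHeartbeats 1000000 in
/-- Pre-Grönwall bound for the inverse Euler approximations of the fractional CIR
volatility process: for every point of the partition,
`(Ŷₖ)^p ≤ ((4Y₀)^p + (8κT/Y₀)^p + (8ν)^p · sup_{s∈[0,T]}|B(s)|^p)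
          + (8θ)^p T^{p−1} Σ_{j=1}^{k} (Ŷⱼ)^p Δₙ`. -/
theorem invEuler_pre_gronwall_bound
    (p κ θ ν Y₀ T : ℝ) (n : ℕ) (hp : 1 ≤ p) (hκ : 0 < κ) (hθ : 0 < θ) (hν : 0 < ν)
    (hY₀ : 0 < Y₀) (hT : 0 < T) (hn : 1 ≤ n) (B : ℝ → ℝ)
    (hBbdd : ∃ M : ℝ, ∀ s ∈ Set.Icc (0 : ℝ) T, |B s| ≤ M) (hB0 : B 0 = 0) :
    ∀ k : ℕ, 1 ≤ k → k ≤ n →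
      (invEulerSeq κ θ ν Y₀ T n B k) ^ p ≤
        ((4 * Y₀) ^ p + (8 * κ * T / Y₀) ^ p
            + (8 * ν) ^ p * sSup ((fun s => |B s| ^ p) '' Set.Icc (0 : ℝ) T))
          + (8 * θ) ^ p * T ^ (p - 1) *
              ∑ j ∈ Finset.Icc 1 k, (invEulerSeq κ θ ν Y₀ T n B j) ^ p * (T / n) := by
  intro k hk1 hkn
  set Y := invEulerSeq κ θ ν Y₀ T n B with hY
  have hn0 : (0:ℝ) < n := by exact_mod_cast Nat.lt_of_lt_of_le Nat.zero_lt_one hn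
  have hΔ : 0 < T / n := div_pos hT hn0
  have hp0 : 0 < p := lt_of_lt_of_le one_pos hp
  have hYpos : ∀ j, 0 < Y j := invEulerSeq_pos κ θ ν Y₀ T n B hκ hθ.le hY₀ hΔ
  obtain ⟨M₀, hM₀⟩ := hBbdd
  set S := sSup ((fun s => |B s| ^ p) '' Set.Icc (0 : ℝ) T) with hSdef
  have hbdd : BddAbove ((fun s => |B s| ^ p) '' Set.Icc (0 : ℝ) T) := by
    refine ⟨|M₀| ^ p, ?_⟩
    rintro y ⟨s, hs, rfl⟩
    exact Real.rpow_le_rpow (abs_nonneg _) ((hM₀ s hs).trans (le_abs_self _)) hp0.le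
  have hmem : ∀ s ∈ Set.Icc (0:ℝ) T, |B s| ^ p ≤ S := fun s hs =>
    le_csSup hbdd ⟨s, hs, rfl⟩
  have hS0 : 0 ≤ S := by
    have h0 : |B 0| ^ p ≤ S := hmem 0 ⟨le_refl _, hT.le⟩
    rwa [hB0, abs_zero, Real.zero_rpow hp0.ne'] at h0
  set M := S ^ (1 / p) with hMdef
  have hM0 : 0 ≤ M := Real.rpow_nonneg hS0 _
  have hMp : M ^ p = S := by
    rw [hMdef, ← Real.rpow_mul hS0, one_div_mul_cancel hp0.ne', Real.rpow_one]
  have hMbd : ∀ s ∈ Set.Icc (0:ℝ) T, |B s| ≤ M := by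
    intro s hs
    have h1 : (|B s| ^ p) ^ (1 / p) ≤ S ^ (1 / p) :=
      Real.rpow_le_rpow (Real.rpow_nonneg (abs_nonneg _) _) (hmem s hs) (by positivity)
    rwa [← Real.rpow_mul (abs_nonneg _), mul_one_div_cancel hp0.ne', Real.rpow_one] at h1
  -- the inductive invariant
  have inv : ∀ j : ℕ, j ≤ n →
      Y j - ν / 2 * B ((j : ℝ) * T / n) - κ / (2 * Y₀) * ((j : ℝ) * T / n)
        ≤ Y₀ + ν * M / 2 := by
    intro j
    induction j with
    | zero =>
      intro _
      simp only [Nat.cast_zero, zero_mul, zero_div, hB0, mul_zero, sub_zero]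
      have : Y 0 = Y₀ := rfl
      rw [this]
      nlinarith [mul_nonneg hν.le hM0]
    | succ j ih =>
      intro hj1
      have hjn : j ≤ n := Nat.le_of_succ_le hj1
      have hid : Y (j + 1) = Y j + ν / 2 * (B (((j : ℝ) + 1) * T / n) - B ((j : ℝ) * T / n))
          + (T / n) * (κ / (2 * Y (j + 1)) - θ / 2 * Y (j + 1)) :=
        invEulerStep_eq κ θ ν (T / n) (Y (j + 1)) _ (Y j) hκ hθ.le hΔ rfl
      have hcast : ((j + 1 : ℕ) : ℝ) = (j : ℝ) + 1 := by push_cast; ring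
      have htmem : ((j : ℝ) + 1) * T / n ∈ Set.Icc (0:ℝ) T := by
        constructor
        · positivity
        · rw [div_le_iff₀ hn0]
          have : ((j : ℝ) + 1) ≤ n := by exact_mod_cast hj1
          nlinarith
      have hBb := hMbd _ htmem
      rcases le_or_gt (Y (j + 1)) Y₀ with hcase | hcase
      · rw [hcast]
        have ht0 : 0 ≤ ((j : ℝ) + 1) * T / n := by positivity
        have h1 : 0 ≤ κ / (2 * Y₀) * (((j : ℝ) + 1) * T / n) := by positivity
        have h2 : - (ν / 2 * B (((j : ℝ) + 1) * T / n)) ≤ ν / 2 * M := by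
          rw [← mul_neg]
          apply mul_le_mul_of_nonneg_left _ (by positivity : (0:ℝ) ≤ ν / 2)
          linarith [neg_abs_le (B (((j : ℝ) + 1) * T / n)), hBb]
        linarith
      · have ihj := ih hjn
        have hkk : κ / (2 * Y (j + 1)) ≤ κ / (2 * Y₀) := by
          rw [div_le_div_iff₀ (by linarith [hYpos (j + 1)]) (by positivity)]
          nlinarith
        have h4 : (T / n) * (κ / (2 * Y (j + 1))) ≤ (T / n) * (κ / (2 * Y₀)) :=
          mul_le_mul_of_nonneg_left hkk hΔ.le
        have h5 : 0 ≤ (T / n) * (θ / 2 * Y (j + 1)) := by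
          have := (hYpos (j + 1)).le
          positivity
        rw [hcast]
        have heq : κ / (2 * Y₀) * (((j : ℝ) + 1) * T / n)
            = κ / (2 * Y₀) * ((j : ℝ) * T / n) + T / n * (κ / (2 * Y₀)) := by ring
        have hid' : Y (j + 1) - ν / 2 * B (((j : ℝ) + 1) * T / n)
            = Y j - ν / 2 * B ((j : ℝ) * T / n)
              + T / n * (κ / (2 * Y (j + 1))) - T / n * (θ / 2 * Y (j + 1)) := by
          linear_combination hid
        linarith [hid', ihj, h4, h5, heq]
  -- global bound
  have hbound : Y k ≤ Y₀ + ν * M + κ * T / (2 * Y₀) := by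
    have h := inv k hkn
    have htmem : (k : ℝ) * T / n ∈ Set.Icc (0:ℝ) T := by
      constructor
      · positivity
      · rw [div_le_iff₀ hn0]
        have : ((k : ℝ)) ≤ n := by exact_mod_cast hkn
        nlinarith
    have hBb := hMbd _ htmem
    have ht1 : (k : ℝ) * T / n ≤ T := htmem.2
    have ht0 : 0 ≤ (k : ℝ) * T / n := htmem.1
    have h6 : κ / (2 * Y₀) * ((k : ℝ) * T / n) ≤ κ / (2 * Y₀) * T :=
      mul_le_mul_of_nonneg_left ht1 (by positivity)
    have h7 : ν / 2 * B ((k : ℝ) * T / n) ≤ ν / 2 * M := by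
      apply mul_le_mul_of_nonneg_left _ (by positivity)
      exact (le_abs_self _).trans hBb
    have h8 : κ / (2 * Y₀) * T = κ * T / (2 * Y₀) := by ring
    nlinarith
  have hstep1 : Y k ^ p ≤ (Y₀ + ν * M + κ * T / (2 * Y₀)) ^ p :=
    Real.rpow_le_rpow (hYpos k).le hbound hp0.le
  set m3 := max Y₀ (max (ν * M) (κ * T / (2 * Y₀))) with hm3
  have hsum3 : Y₀ + ν * M + κ * T / (2 * Y₀) ≤ 3 * m3 := by
    have h1 : Y₀ ≤ m3 := le_max_left _ _
    have h2 : ν * M ≤ m3 := le_trans (le_max_left _ _) (le_max_right _ _)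
    have h3 : κ * T / (2 * Y₀) ≤ m3 := le_trans (le_max_right _ _) (le_max_right _ _)
    linarith
  have hm30 : 0 ≤ m3 := le_trans hY₀.le (le_max_left _ _)
  have hstep2 : Y k ^ p ≤ (3 * m3) ^ p :=
    hstep1.trans (Real.rpow_le_rpow (by positivity) hsum3 hp0.le)
  have hT1 : 0 ≤ (4 * Y₀) ^ p := Real.rpow_nonneg (by positivity) _
  have hT2 : 0 ≤ (8 * κ * T / Y₀) ^ p := Real.rpow_nonneg (by positivity) _
  have hT3 : 0 ≤ (8 * ν) ^ p * S := mul_nonneg (Real.rpow_nonneg (by positivity) _) hS0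
  have hmax : (3 * m3) ^ p ≤ (4 * Y₀) ^ p + (8 * κ * T / Y₀) ^ p + (8 * ν) ^ p * S := by
    rcases max_cases Y₀ (max (ν * M) (κ * T / (2 * Y₀))) with ⟨he, _⟩ | ⟨he, _⟩
    · have hx : (3 * m3) ^ p ≤ (4 * Y₀) ^ p := by
        rw [hm3, he]; exact Real.rpow_le_rpow (by positivity) (by linarith) hp0.le
      linarith
    · rcases max_cases (ν * M) (κ * T / (2 * Y₀)) with ⟨he2, _⟩ | ⟨he2, _⟩
      · have hx : (3 * m3) ^ p ≤ (8 * ν) ^ p * S := by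
        -- body
          rw [hm3, he, he2]
          calc (3 * (ν * M)) ^ p ≤ (8 * ν * M) ^ p :=
                Real.rpow_le_rpow (by positivity) (by nlinarith [mul_nonneg hν.le hM0]) hp0.le
          _ = (8 * ν) ^ p * M ^ p := Real.mul_rpow (by positivity) hM0
          _ = (8 * ν) ^ p * S := by rw [hMp]
        linarith
      · have hx : (3 * m3) ^ p ≤ (8 * κ * T / Y₀) ^ p := by
          rw [hm3, he, he2]
          apply Real.rpow_le_rpow (by positivity) _ hp0.le
          rw [show (3:ℝ) * (κ * T / (2 * Y₀)) = (3 / 2) * (κ * T / Y₀) from by ring,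
            show (8:ℝ) * κ * T / Y₀ = 8 * (κ * T / Y₀) from by ring]
          have hq : 0 ≤ κ * T / Y₀ := by positivity
          linarith
        linarith
  have hsumnn : 0 ≤ (8 * θ) ^ p * T ^ (p - 1) *
      ∑ j ∈ Finset.Icc 1 k, Y j ^ p * (T / n) := by
    apply mul_nonneg (mul_nonneg (Real.rpow_nonneg (by positivity) _)
      (Real.rpow_nonneg hT.le _))
    apply Finset.sum_nonneg
    intro j _
    exact mul_nonneg (Real.rpow_nonneg (hYpos j).le _) hΔ.le
  linarith [hstep2.trans hmax]
end

section
/- Let 0 ≤ u < T, ν ∈ ℝ, and let k : [u, T] → ℝ and h : [u, T] → ℝ be continuous functions. Define Z : [u, T] → ℝ by Z(t) = ν·(k(t) − ∫ᵤᵗ k(s)·h(s)·exp(−∫ₛᵗ h(v) dv) ds). Then for every t ∈ [u, T]: Z(t) = −∫ᵤᵗ h(s)·Z(s) ds + ν·k(t). -/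
open MeasureTheory intervalIntegral

/-- Explicit solution of the linear Volterra integral equation
`Z(t) = −∫ᵤᵗ h(s)Z(s) ds + ν·k(t)`: the function
`Z(t) = ν·(k(t) − ∫ᵤᵗ k(s)h(s)·exp(−∫ₛᵗ h(v) dv) ds)` satisfies it on `[u,T]`. -/
theorem volterra_explicit_solution
    (u T ν : ℝ) (huT : u < T) (hu : 0 ≤ u)
    (k h : ℝ → ℝ)
    (hk : ContinuousOn k (Set.Icc u T)) (hh : ContinuousOn h (Set.Icc u T)) :
    ∀ t ∈ Set.Icc u T,
      (fun t => ν * (k t - ∫ s in u..t, k s * h s * Real.exp (-∫ v in s..t, h v))) t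
        = -(∫ s in u..t,
              h s * (fun t => ν * (k t - ∫ r in u..t,
                k r * h r * Real.exp (-∫ v in r..t, h v))) s)
          + ν * k t := by
  -- notation
  set H : ℝ → ℝ := fun t => ∫ v in u..t, h v with hH
  set G : ℝ → ℝ := fun t => ∫ s in u..t, k s * h s * Real.exp (H s) with hG
  set F : ℝ → ℝ := fun t => Real.exp (-H t) * G t with hFdef
  have hsub : ∀ t ∈ Set.Icc u T, Set.uIcc u t ⊆ Set.Icc u T := by
    intro t ht
    rw [Set.uIcc_of_le ht.1]
    exact Set.Icc_subset_Icc le_rfl ht.2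
  have hhint : ∀ t ∈ Set.Icc u T, IntervalIntegrable h volume u t := by
    intro t ht
    exact (hh.mono (hsub t ht)).intervalIntegrable
  -- continuity of H on Icc u T
  have hHcont : ContinuousOn H (Set.Icc u T) := by
    have : ContinuousOn H (Set.uIcc u T) := by
      exact intervalIntegral.continuousOn_primitive_interval
        ((hh.mono (by rw [Set.uIcc_of_le huT.le])).integrableOn_compact isCompact_uIcc)
    rwa [Set.uIcc_of_le huT.le] at this
  -- integrand of G is continuous on Icc u T
  have hGint_cont : ContinuousOn (fun s => k s * h s * Real.exp (H s)) (Set.Icc u T) :=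
    ((hk.mul hh).mul ((Real.continuous_exp.comp_continuousOn hHcont)))
  have hGcont : ContinuousOn G (Set.Icc u T) := by
    have : ContinuousOn G (Set.uIcc u T) := by
      exact intervalIntegral.continuousOn_primitive_interval
        ((hGint_cont.mono (by rw [Set.uIcc_of_le huT.le])).integrableOn_compact isCompact_uIcc)
    rwa [Set.uIcc_of_le huT.le] at this
  have hFcont : ContinuousOn F (Set.Icc u T) :=
    ((Real.continuous_exp.comp_continuousOn hHcont.neg)).mul hGcont
  -- key rewriting: ∫ s in u..t, k s * h s * exp (-∫ v in s..t, h v) = F t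
  have key : ∀ t ∈ Set.Icc u T,
      (∫ s in u..t, k s * h s * Real.exp (-∫ v in s..t, h v)) = F t := by
    intro t ht
    have h1 : ∀ s ∈ Set.uIcc u t,
        k s * h s * Real.exp (-∫ v in s..t, h v)
          = Real.exp (-H t) * (k s * h s * Real.exp (H s)) := by
      intro s hs
      rw [Set.uIcc_of_le ht.1] at hs
      have hst : (∫ v in s..t, h v) = H t - H s := by
        have h2 : IntervalIntegrable h volume u s :=
          hhint s ⟨hs.1, hs.2.trans ht.2⟩
        have h3 : IntervalIntegrable h volume s t :=
          (hh.mono (by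
            rw [Set.uIcc_of_le hs.2]
            exact Set.Icc_subset_Icc hs.1 ht.2)).intervalIntegrable
        have := intervalIntegral.integral_add_adjacent_intervals h2 h3
        simp only [hH]
        linarith [this]
      rw [hst]
      rw [neg_sub, Real.exp_sub, Real.exp_neg]
      field_simp
    rw [intervalIntegral.integral_congr h1, intervalIntegral.integral_const_mul]
  -- derivative of F at interior points
  have hF' : ∀ t ∈ Set.Ioo u T, HasDerivAt F (h t * (k t - F t)) t := by
    intro t ht
    have htIcc : t ∈ Set.Icc u T := Set.Ioo_subset_Icc_self ht
    have hnhds : Set.Icc u T ∈ nhds t := Icc_mem_nhds ht.1 ht.2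
    have hhct : ContinuousAt h t := hh.continuousAt hnhds
    have hHt : HasDerivAt H (h t) t :=
      intervalIntegral.integral_hasDerivAt_right (hhint t htIcc)
        (ContinuousOn.stronglyMeasurableAtFilter isOpen_Ioo
          (hh.mono Set.Ioo_subset_Icc_self) t ht) hhct
    have hGct : ContinuousAt (fun s => k s * h s * Real.exp (H s)) t :=
      hGint_cont.continuousAt hnhds
    have hGt : HasDerivAt G (k t * h t * Real.exp (H t)) t :=
      intervalIntegral.integral_hasDerivAt_right
        ((hGint_cont.mono (hsub t htIcc)).intervalIntegrable)
        (ContinuousOn.stronglyMeasurableAtFilter isOpen_Ioo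
          (hGint_cont.mono Set.Ioo_subset_Icc_self) t ht) hGct
    have hEt : HasDerivAt (fun s => Real.exp (-H s)) (Real.exp (-H t) * (-h t)) t := by
      have := (hHt.neg).exp
      simpa [mul_comm] using this
    have := hEt.mul hGt
    have heq : Real.exp (-H t) * (-h t) * G t
        + Real.exp (-H t) * (k t * h t * Real.exp (H t)) = h t * (k t - F t) := by
      have : Real.exp (-H t) * Real.exp (H t) = 1 := by
        rw [← Real.exp_add]; simp
      simp only [hFdef]
      linear_combination k t * h t * this
    rw [heq] at this
    exact this
  intro t ht
  simp only []
  rw [key t ht]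
  -- rewrite inner integrals via key
  have hcongr : ∀ s ∈ Set.uIcc u t,
      h s * (ν * (k s - ∫ r in u..s, k r * h r * Real.exp (-∫ v in r..s, h v)))
        = ν * (h s * (k s - F s)) := by
    intro s hs
    rw [Set.uIcc_of_le ht.1] at hs
    rw [key s ⟨hs.1, hs.2.trans ht.2⟩]
    ring
  rw [intervalIntegral.integral_congr hcongr, intervalIntegral.integral_const_mul]
  -- FTC
  have hint : IntervalIntegrable (fun s => h s * (k s - F s)) volume u t :=
    ((hh.mul (hk.sub hFcont)).mono (hsub t ht)).intervalIntegrable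
  have hFTC : (∫ s in u..t, h s * (k s - F s)) = F t - F u := by
    apply intervalIntegral.integral_eq_sub_of_hasDerivAt_of_le ht.1
      (hFcont.mono (by exact Set.Icc_subset_Icc le_rfl ht.2))
      (fun x hx => hF' x ⟨hx.1, hx.2.trans_le ht.2⟩) hint
  have hFu : F u = 0 := by
    simp [hFdef, hG]
  rw [hFTC, hFu]
  ring
end

section
/- Let H ∈ (1/2, 1), κ, θ, ν, T > 0, let α satisfy max{0, 1 − κ/(ν²·H·T^{2H−1})} < α < 1, let ε > 0, let y : [0, T] → (0, ∞) be continuous, and set h(v) = κ/(2·y(v)²) + θ/2. Then for all 0 ≤ t₀ < t ≤ T: ∫_{t₀}^{t} κα/(2·y(u)·(y(u)+ε)^{1−α}) du − ∫_{t₀}^{t} ∫₀ᵘ ((ν²/2)·α(1−α)·exp(−∫ₛᵘ h(v) dv)·H(2H−1)·(u−s)^{2H−2}) / (2·(y(u)+ε)^{2−α}) ds du ≥ (ακ/4)·∫_{t₀}^{t} 1/(y(u)+ε)^{2−α} du. -/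
open MeasureTheory intervalIntegral

/-- Key deterministic estimate in the integrated inverse-moment bound for the
fractional CIR volatility process: for a positive continuous trajectory `y`,
`h(v) = κ/(2y(v)²) + θ/2`, and `α` with
`max{0, 1 − κ/(ν²HT^{2H−1})} < α < 1`, one has for all `0 ≤ t₀ < t ≤ T`:
`∫_{t₀}^t κα/(2y(u)(y(u)+ε)^{1−α}) du
  − ∫_{t₀}^t ∫₀ᵘ ((ν²/2)α(1−α)·exp(−∫ₛᵘ h)·H(2H−1)(u−s)^{2H−2})/(2(y(u)+ε)^{2−α}) ds du
  ≥ (ακ/4)·∫_{t₀}^t (y(u)+ε)^{−(2−α)} du`. -/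
theorem integrated_inverse_moment_key_estimate
    (H κ θ ν T α ε : ℝ) (hH : H ∈ Set.Ioo (1 / 2 : ℝ) 1)
    (hκ : 0 < κ) (hθ : 0 < θ) (hν : 0 < ν) (hT : 0 < T)
    (hα₁ : max 0 (1 - κ / (ν ^ 2 * H * T ^ (2 * H - 1))) < α) (hα₂ : α < 1)
    (hε : 0 < ε)
    (y : ℝ → ℝ) (hy_cont : ContinuousOn y (Set.Icc 0 T))
    (hy_pos : ∀ v ∈ Set.Icc (0 : ℝ) T, 0 < y v) :
    ∀ t₀ t : ℝ, 0 ≤ t₀ → t₀ < t → t ≤ T →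
      (∫ u in t₀..t, κ * α / (2 * y u * (y u + ε) ^ (1 - α)))
        - (∫ u in t₀..t, ∫ s in (0 : ℝ)..u,
            (ν ^ 2 / 2 * α * (1 - α)
                * Real.exp (-∫ v in s..u, κ / (2 * y v ^ 2) + θ / 2)
                * (H * (2 * H - 1)) * (u - s) ^ (2 * H - 2))
              / (2 * (y u + ε) ^ (2 - α)))
        ≥ α * κ / 4 * ∫ u in t₀..t, 1 / (y u + ε) ^ (2 - α) := by
  obtain ⟨hH1, hH2⟩ := hH
  have hα0 : 0 < α := lt_of_le_of_lt (le_max_left _ _) hα₁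
  have h2H1 : 0 < 2 * H - 1 := by linarith
  have hTp : 0 < T ^ (2 * H - 1) := Real.rpow_pos_of_pos hT _
  have hD : 0 < ν ^ 2 * H * T ^ (2 * H - 1) :=
    mul_pos (mul_pos (pow_pos hν 2) (by linarith)) hTp
  have hκD : (1 - α) * (ν ^ 2 * H * T ^ (2 * H - 1)) < κ := by
    have h := lt_of_le_of_lt (le_max_right _ _) hα₁
    have h2 : 1 - α < κ / (ν ^ 2 * H * T ^ (2 * H - 1)) := by linarith
    exact (lt_div_iff₀ hD).mp h2
  set c : ℝ := ν ^ 2 / 4 * α * (1 - α) * H * T ^ (2 * H - 1) with hc_def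
  have hc0 : 0 ≤ c :=
    mul_nonneg (mul_nonneg (mul_nonneg (mul_nonneg (by positivity) hα0.le)
      (by linarith)) (by linarith)) hTp.le
  have hcle : c ≤ α * κ / 4 := by nlinarith [hκD, hα0]
  intro t₀ t ht₀ htt htT
  have hsub : Set.Icc t₀ t ⊆ Set.Icc 0 T := Set.Icc_subset_Icc ht₀ htT
  have huIcc : Set.uIcc t₀ t = Set.Icc t₀ t := Set.uIcc_of_le htt.le
  -- basic positivity on the interval
  have hb : ∀ u ∈ Set.Icc t₀ t, 0 < y u + ε := fun u hu =>
    add_pos (hy_pos u (hsub hu)) hε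
  -- continuity / integrability of f u = 1/(y u + ε)^(2-α)
  have hycont' : ContinuousOn y (Set.Icc t₀ t) := hy_cont.mono hsub
  have hfcont : ContinuousOn (fun u => 1 / (y u + ε) ^ (2 - α)) (Set.Icc t₀ t) := by
    apply ContinuousOn.div continuousOn_const
    · exact (hycont'.add continuousOn_const).rpow_const
        (fun x hx => Or.inl (hb x hx).ne')
    · exact fun x hx => (Real.rpow_pos_of_pos (hb x hx) _).ne'
  have hf_int : IntervalIntegrable (fun u => 1 / (y u + ε) ^ (2 - α)) volume t₀ t := by
    rw [intervalIntegrable_iff_integrableOn_Icc_of_le htt.le]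
    exact hfcont.integrableOn_compact isCompact_Icc
  have hf_nonneg : ∀ u ∈ Set.Icc t₀ t, 0 ≤ 1 / (y u + ε) ^ (2 - α) := fun u hu =>
    div_nonneg zero_le_one (Real.rpow_nonneg (hb u hu).le _)
  have hfI_nonneg : 0 ≤ ∫ u in t₀..t, 1 / (y u + ε) ^ (2 - α) :=
    intervalIntegral.integral_nonneg htt.le hf_nonneg
  -- Term1 integrability
  have hT1cont : ContinuousOn (fun u => κ * α / (2 * y u * (y u + ε) ^ (1 - α)))
      (Set.Icc t₀ t) := by
    apply ContinuousOn.div continuousOn_const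
    · exact (continuousOn_const.mul hycont').mul
        ((hycont'.add continuousOn_const).rpow_const (fun x hx => Or.inl (hb x hx).ne'))
    · intro x hx
      have h1 : 0 < y x := hy_pos x (hsub hx)
      have h2 : 0 < (y x + ε) ^ (1 - α) := Real.rpow_pos_of_pos (hb x hx) _
      positivity
  have hT1_int : IntervalIntegrable (fun u => κ * α / (2 * y u * (y u + ε) ^ (1 - α)))
      volume t₀ t := by
    rw [intervalIntegrable_iff_integrableOn_Icc_of_le htt.le]
    exact hT1cont.integrableOn_compact isCompact_Icc
  -- pointwise bound on Term1
  have hA : ∀ u ∈ Set.Icc t₀ t,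
      α * κ / 2 * (1 / (y u + ε) ^ (2 - α)) ≤ κ * α / (2 * y u * (y u + ε) ^ (1 - α)) := by
    intro u hu
    have hyu : 0 < y u := hy_pos u (hsub hu)
    have hbu : 0 < y u + ε := hb u hu
    have hpow : (y u + ε) ^ (2 - α) = (y u + ε) ^ (1 - α) * (y u + ε) := by
      rw [← Real.rpow_add_one hbu.ne']
      congr 1
      ring
    have hp1 : 0 < (y u + ε) ^ (1 - α) := Real.rpow_pos_of_pos hbu _
    have e1 : α * κ / 2 * (1 / (y u + ε) ^ (2 - α))
        = κ * α / (2 * (y u + ε) * (y u + ε) ^ (1 - α)) := by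
      rw [hpow, mul_one_div,
        div_eq_div_iff (mul_pos hp1 hbu).ne' (mul_pos (mul_pos two_pos hbu) hp1).ne']
      ring
    rw [e1]
    apply div_le_div_of_nonneg_left (by positivity) (by positivity)
    nlinarith [hp1, hε]
  have hT1_ge : α * κ / 2 * (∫ u in t₀..t, 1 / (y u + ε) ^ (2 - α))
      ≤ ∫ u in t₀..t, κ * α / (2 * y u * (y u + ε) ^ (1 - α)) := by
    rw [← intervalIntegral.integral_const_mul]
    exact intervalIntegral.integral_mono_on htt.le (hf_int.const_mul _) hT1_int hA
  -- the inner double-integral term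
  set G : ℝ → ℝ := fun u => ∫ s in (0 : ℝ)..u,
      (ν ^ 2 / 2 * α * (1 - α)
          * Real.exp (-∫ v in s..u, κ / (2 * y v ^ 2) + θ / 2)
          * (H * (2 * H - 1)) * (u - s) ^ (2 * H - 2))
        / (2 * (y u + ε) ^ (2 - α)) with hG_def
  have hB : ∀ u ∈ Set.Icc t₀ t, 0 ≤ G u ∧ G u ≤ c * (1 / (y u + ε) ^ (2 - α)) := by
    intro u hu
    have hu0 : 0 ≤ u := le_trans ht₀ hu.1
    have huT : u ≤ T := le_trans hu.2 htT
    have hbu : 0 < y u + ε := hb u hu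
    have hDu : 0 < (y u + ε) ^ (2 - α) := Real.rpow_pos_of_pos hbu _
    have hHH : 0 ≤ H * (2 * H - 1) := mul_nonneg (by linarith) (by linarith)
    constructor
    · apply intervalIntegral.integral_nonneg hu0
      intro s hs
      refine div_nonneg ?_ (by positivity)
      refine mul_nonneg ?_ (Real.rpow_nonneg (by linarith [hs.2]) _)
      refine mul_nonneg ?_ hHH
      refine mul_nonneg ?_ (Real.exp_nonneg _)
      refine mul_nonneg (by positivity) (by linarith)
    · by_cases hgint : IntervalIntegrable (fun s =>
          (ν ^ 2 / 2 * α * (1 - α)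
              * Real.exp (-∫ v in s..u, κ / (2 * y v ^ 2) + θ / 2)
              * (H * (2 * H - 1)) * (u - s) ^ (2 * H - 2))
            / (2 * (y u + ε) ^ (2 - α))) volume 0 u
      · -- comparison function
        set K : ℝ := (ν ^ 2 / 2 * α * (1 - α) * (H * (2 * H - 1)))
            / (2 * (y u + ε) ^ (2 - α)) with hK_def
        have hK0 : 0 ≤ K := by
          refine div_nonneg ?_ (by positivity)
          refine mul_nonneg ?_ hHH
          refine mul_nonneg (by positivity) (by linarith)
        have hcomp_int0 : IntervalIntegrable (fun x : ℝ => x ^ (2 * H - 2)) volume 0 u :=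
          intervalIntegrable_rpow' (by linarith)
        have hcomp_int : IntervalIntegrable (fun s : ℝ => K * (u - s) ^ (2 * H - 2))
            volume 0 u := by
          have h2 := (hcomp_int0.comp_sub_left u).symm
          simp only [sub_zero, sub_self] at h2
          exact h2.const_mul K
        have hle : ∀ s ∈ Set.Icc (0 : ℝ) u,
            (ν ^ 2 / 2 * α * (1 - α)
                * Real.exp (-∫ v in s..u, κ / (2 * y v ^ 2) + θ / 2)
                * (H * (2 * H - 1)) * (u - s) ^ (2 * H - 2))
              / (2 * (y u + ε) ^ (2 - α)) ≤ K * (u - s) ^ (2 * H - 2) := by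
          intro s hs
          have hexp : Real.exp (-∫ v in s..u, κ / (2 * y v ^ 2) + θ / 2) ≤ 1 := by
            rw [Real.exp_le_one_iff, neg_nonpos]
            apply intervalIntegral.integral_nonneg hs.2
            intro v _
            have : 0 ≤ κ / (2 * y v ^ 2) := div_nonneg hκ.le (by positivity)
            linarith
          have hKp : 0 ≤ K * (u - s) ^ (2 * H - 2) :=
            mul_nonneg hK0 (Real.rpow_nonneg (by linarith [hs.2]) _)
          calc (ν ^ 2 / 2 * α * (1 - α)
                * Real.exp (-∫ v in s..u, κ / (2 * y v ^ 2) + θ / 2)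
                * (H * (2 * H - 1)) * (u - s) ^ (2 * H - 2))
              / (2 * (y u + ε) ^ (2 - α))
              = (K * (u - s) ^ (2 * H - 2))
                * Real.exp (-∫ v in s..u, κ / (2 * y v ^ 2) + θ / 2) := by
                rw [hK_def]; field_simp
            _ ≤ (K * (u - s) ^ (2 * H - 2)) * 1 := mul_le_mul_of_nonneg_left hexp hKp
            _ = K * (u - s) ^ (2 * H - 2) := mul_one _
        have hstep1 : G u ≤ ∫ s in (0 : ℝ)..u, K * (u - s) ^ (2 * H - 2) :=
          intervalIntegral.integral_mono_on hu0 hgint hcomp_int hle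
        have hcalc : (∫ s in (0 : ℝ)..u, K * (u - s) ^ (2 * H - 2))
            = K * (u ^ (2 * H - 1) / (2 * H - 1)) := by
          rw [intervalIntegral.integral_const_mul]
          congr 1
          have h1 : (∫ s in (0 : ℝ)..u, (u - s) ^ (2 * H - 2))
              = ∫ x in (u - u)..(u - 0), x ^ (2 * H - 2) :=
            intervalIntegral.integral_comp_sub_left (fun x => x ^ (2 * H - 2)) u
          rw [h1]
          simp only [sub_self, sub_zero]
          rw [integral_rpow (Or.inl (by linarith))]
          rw [show 2 * H - 2 + 1 = 2 * H - 1 from by ring,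
            Real.zero_rpow h2H1.ne']
          ring
        have hstep2 : K * (u ^ (2 * H - 1) / (2 * H - 1))
            ≤ K * (T ^ (2 * H - 1) / (2 * H - 1)) := by
          have hrT : u ^ (2 * H - 1) ≤ T ^ (2 * H - 1) :=
            Real.rpow_le_rpow hu0 huT h2H1.le
          gcongr
        have hfinal : K * (T ^ (2 * H - 1) / (2 * H - 1))
            = c * (1 / (y u + ε) ^ (2 - α)) := by
          rw [hK_def, hc_def, div_mul_div_comm, mul_one_div,
            div_eq_div_iff (mul_pos (mul_pos two_pos hDu) h2H1).ne' hDu.ne']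
          ring
        calc G u ≤ K * (u ^ (2 * H - 1) / (2 * H - 1)) := by rw [← hcalc]; exact hstep1
          _ ≤ K * (T ^ (2 * H - 1) / (2 * H - 1)) := hstep2
          _ = c * (1 / (y u + ε) ^ (2 - α)) := hfinal
      · have hGu : G u = 0 := intervalIntegral.integral_undef hgint
        rw [hGu]
        exact mul_nonneg hc0 (div_nonneg zero_le_one (Real.rpow_nonneg hbu.le _))
  by_cases hGint : IntervalIntegrable G volume t₀ t
  · have hG_le : (∫ u in t₀..t, G u)
        ≤ c * ∫ u in t₀..t, 1 / (y u + ε) ^ (2 - α) := by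
      rw [← intervalIntegral.integral_const_mul]
      exact intervalIntegral.integral_mono_on htt.le hGint (hf_int.const_mul _)
        (fun u hu => (hB u hu).2)
    have : c * (∫ u in t₀..t, 1 / (y u + ε) ^ (2 - α))
        ≤ α * κ / 4 * ∫ u in t₀..t, 1 / (y u + ε) ^ (2 - α) := by
      apply mul_le_mul_of_nonneg_right hcle hfI_nonneg
    have h4 : α * κ / 2 * (∫ u in t₀..t, 1 / (y u + ε) ^ (2 - α))
        = α * κ / 4 * (∫ u in t₀..t, 1 / (y u + ε) ^ (2 - α))
          + α * κ / 4 * (∫ u in t₀..t, 1 / (y u + ε) ^ (2 - α)) := by ring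
    linarith only [hT1_ge, hG_le, this, h4]
  · rw [intervalIntegral.integral_undef hGint]
    have hq : 0 ≤ α * κ / 4 * ∫ u in t₀..t, 1 / (y u + ε) ^ (2 - α) :=
      mul_nonneg (by positivity) hfI_nonneg
    have h4 : α * κ / 2 * (∫ u in t₀..t, 1 / (y u + ε) ^ (2 - α))
        = α * κ / 4 * (∫ u in t₀..t, 1 / (y u + ε) ^ (2 - α))
          + α * κ / 4 * (∫ u in t₀..t, 1 / (y u + ε) ^ (2 - α)) := by ring
    linarith only [hT1_ge, hq, h4]
end

section
/- Let κ, θ, ν, T > 0, y₀ > 0 and p > 0. There exist constants C₁ = C₁(T, p, y₀, κ, θ) > 0 and C₂ = C₂(T, p, θ, ν) > 0 such that for every continuous function B : [0, T] → ℝ with B(0) = 0 and every continuous function y : [0, T] → (0, ∞) satisfying y(t) = y₀ + ∫₀ᵗ (1/2)·(κ/y(s) − θ·y(s)) ds + (ν/2)·B(t) for all t ∈ [0, T], one has y(t)^p ≤ C₁ + C₂·sup_{s∈[0,T]} |B(s)|^p for all t ∈ [0, T]. -/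
open MeasureTheory intervalIntegral

/-- Pathwise upper bound for the fractional CIR volatility process: there exist
non-random constants `C₁, C₂ > 0` such that any positive continuous solution of
`y(t) = y₀ + ∫₀ᵗ (1/2)(κ/y(s) − θy(s)) ds + (ν/2)B(t)` with continuous driver `B`
satisfies `y(t)^p ≤ C₁ + C₂·sup_{s∈[0,T]}|B(s)|^p` for all `t ∈ [0,T]`. -/
theorem volatility_path_upper_bound
    (κ θ ν T y₀ p : ℝ) (hκ : 0 < κ) (hθ : 0 < θ) (hν : 0 < ν) (hT : 0 < T)
    (hy₀ : 0 < y₀) (hp : 0 < p) :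
    ∃ C₁ > (0 : ℝ), ∃ C₂ > (0 : ℝ),
      ∀ B : ℝ → ℝ, ContinuousOn B (Set.Icc 0 T) → B 0 = 0 →
      ∀ y : ℝ → ℝ, ContinuousOn y (Set.Icc 0 T) →
        (∀ s ∈ Set.Icc (0 : ℝ) T, 0 < y s) →
        (∀ t ∈ Set.Icc (0 : ℝ) T,
          y t = y₀ + (∫ s in (0 : ℝ)..t, 1 / 2 * (κ / y s - θ * y s)) + ν / 2 * B t) →
        ∀ t ∈ Set.Icc (0 : ℝ) T,
          (y t) ^ p ≤ C₁ + C₂ * sSup ((fun s => |B s| ^ p) '' Set.Icc (0 : ℝ) T) := by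
  set K : ℝ := max y₀ (Real.sqrt (κ / θ)) with hKdef
  have hK0 : 0 < K := lt_of_lt_of_le hy₀ (le_max_left _ _)
  refine ⟨(2 : ℝ) ^ p * K ^ p, by positivity, (2 : ℝ) ^ p * ν ^ p, by positivity, ?_⟩
  intro B hB hB0 y hy hypos heq
  have hT0 : (0 : ℝ) ∈ Set.Icc (0 : ℝ) T := ⟨le_refl 0, hT.le⟩
  have hy0 : y 0 = y₀ := by
    have := heq 0 hT0
    simpa [hB0] using this
  -- maximum of |B| on [0,T]
  have hBabs : ContinuousOn (fun s => |B s|) (Set.Icc 0 T) := hB.abs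
  obtain ⟨u, huIcc, humax⟩ :=
    isCompact_Icc.exists_isMaxOn (⟨0, hT0⟩ : (Set.Icc (0:ℝ) T).Nonempty) hBabs
  set Mb : ℝ := |B u| with hMbdef
  have hMb0 : 0 ≤ Mb := abs_nonneg _
  have hMb : ∀ v ∈ Set.Icc (0 : ℝ) T, |B v| ≤ Mb := fun v hv => humax hv
  set S : ℝ := sSup ((fun s => |B s| ^ p) '' Set.Icc (0 : ℝ) T) with hSdef
  have hScont : ContinuousOn (fun s => |B s| ^ p) (Set.Icc 0 T) :=
    hBabs.rpow_const (fun x _ => Or.inr hp.le)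
  have hbdd : BddAbove ((fun s => |B s| ^ p) '' Set.Icc (0 : ℝ) T) :=
    (isCompact_Icc.image_of_continuousOn hScont).bddAbove
  have hMbS : Mb ^ p ≤ S := le_csSup hbdd ⟨u, huIcc, rfl⟩
  -- continuity and integrability of the drift
  set f : ℝ → ℝ := fun s => 1 / 2 * (κ / y s - θ * y s) with hfdef
  have hfc : ContinuousOn f (Set.Icc 0 T) := by
    apply continuousOn_const.mul
    exact (continuousOn_const.div hy (fun s hs => (hypos s hs).ne')).sub
      (continuousOn_const.mul hy)
  have hint : ∀ a b, a ∈ Set.Icc (0:ℝ) T → b ∈ Set.Icc (0:ℝ) T →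
      IntervalIntegrable f volume a b := fun a b ha hb =>
    (hfc.mono (Set.uIcc_subset_Icc ha hb)).intervalIntegrable
  -- main pathwise bound
  have key : ∀ t ∈ Set.Icc (0 : ℝ) T, y t ≤ K + ν * Mb := by
    intro t ht
    by_cases hle : y t ≤ K
    · nlinarith [mul_nonneg hν.le hMb0]
    push_neg at hle
    set A : Set ℝ := Set.Icc 0 t ∩ y ⁻¹' Set.Iic K with hAdef
    have hsubT : Set.Icc (0:ℝ) t ⊆ Set.Icc (0:ℝ) T := Set.Icc_subset_Icc le_rfl ht.2
    have hAclosed : IsClosed A :=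
      (hy.mono hsubT).preimage_isClosed_of_isClosed isClosed_Icc isClosed_Iic
    have hAcomp : IsCompact A :=
      isCompact_Icc.of_isClosed_subset hAclosed (fun x hx => hx.1)
    have hAne : A.Nonempty := ⟨0, ⟨le_rfl, ht.1⟩, by simp [hy0, hKdef]⟩
    set c : ℝ := sSup A with hcdef
    have hcA : c ∈ A := hAcomp.sSup_mem hAne
    obtain ⟨⟨hc0, hct⟩, hycK⟩ := hcA
    have hcT : c ∈ Set.Icc (0:ℝ) T := ⟨hc0, hct.trans ht.2⟩
    have hgt : ∀ v ∈ Set.Ioc c t, K < y v := by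
      intro v hv
      by_contra h
      push_neg at h
      have hvA : v ∈ A := ⟨⟨hc0.trans hv.1.le, hv.2⟩, h⟩
      exact absurd (le_csSup hAcomp.bddAbove hvA) (not_le.2 hv.1)
    have hfneg : ∀ v ∈ Set.Ioc c t, f v ≤ (0 : ℝ) := by
      intro v hv
      have h2 : Real.sqrt (κ / θ) < y v := lt_of_le_of_lt (le_max_right _ _) (hgt v hv)
      have hκθ : θ * Real.sqrt (κ / θ) ^ 2 = κ := by
        rw [Real.sq_sqrt (by positivity : (0:ℝ) ≤ κ / θ)]
        field_simp
      have hyv : 0 < y v := hypos v ⟨hc0.trans hv.1.le, hv.2.trans ht.2⟩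
      have hsq2 : Real.sqrt (κ / θ) ^ 2 < y v ^ 2 :=
        pow_lt_pow_left₀ h2 (Real.sqrt_nonneg _) two_ne_zero
      have hdiv : κ / y v ≤ θ * y v := by
        rw [div_le_iff₀ hyv]
        nlinarith [hθ]
      simp only [hfdef]
      linarith
    have hsplit : (∫ s in (0:ℝ)..t, f s) = (∫ s in (0:ℝ)..c, f s) + ∫ s in c..t, f s :=
      (integral_add_adjacent_intervals (hint 0 c hT0 hcT) (hint c t hcT ht)).symm
    have hIneg : (∫ s in c..t, f s) ≤ 0 := by
      rw [integral_of_le hct]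
      refine integral_nonpos_of_ae ?_
      rw [Filter.EventuallyLE, ae_restrict_iff' measurableSet_Ioc]
      exact Filter.Eventually.of_forall (fun v hv => hfneg v hv)
    have e1 := heq t ht
    have e2 := heq c hcT
    rw [hsplit] at e1
    have hBt := abs_le.mp (hMb t ht)
    have hBc := abs_le.mp (hMb c hcT)
    have hBdif : ν / 2 * (B t - B c) ≤ ν * Mb := by nlinarith
    have hycK' : y c ≤ K := hycK
    linarith
  -- conclude
  intro t ht
  have hyt := key t ht
  have hytpos := hypos t ht
  have hKM0 : 0 ≤ K + ν * Mb := by positivity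
  have h1 : y t ^ p ≤ (K + ν * Mb) ^ p := Real.rpow_le_rpow hytpos.le hyt hp.le
  have h2 : K + ν * Mb ≤ 2 * max K (ν * Mb) := by
    rcases le_total K (ν * Mb) with h | h
    · rw [max_eq_right h]; linarith
    · rw [max_eq_left h]; linarith
  have h3 : (K + ν * Mb) ^ p ≤ (2 * max K (ν * Mb)) ^ p :=
    Real.rpow_le_rpow hKM0 h2 hp.le
  have h4 : (2 * max K (ν * Mb)) ^ p = 2 ^ p * (max K (ν * Mb)) ^ p :=
    Real.mul_rpow (by norm_num) (le_max_of_le_left hK0.le)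
  have h5 : (max K (ν * Mb)) ^ p ≤ K ^ p + (ν * Mb) ^ p := by
    rcases max_cases K (ν * Mb) with ⟨hm, _⟩ | ⟨hm, _⟩ <;> rw [hm]
    · nlinarith [Real.rpow_nonneg (mul_nonneg hν.le hMb0) p]
    · nlinarith [Real.rpow_nonneg hK0.le p]
  have h6 : (ν * Mb) ^ p = ν ^ p * Mb ^ p := Real.mul_rpow hν.le hMb0
  have h7 : 2 ^ p * (ν ^ p * Mb ^ p) ≤ 2 ^ p * ν ^ p * S := by
    rw [mul_assoc]
    refine mul_le_mul_of_nonneg_left ?_ (Real.rpow_nonneg (by norm_num) p)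
    exact mul_le_mul_of_nonneg_left hMbS (Real.rpow_nonneg hν.le p)
  calc y t ^ p ≤ (K + ν * Mb) ^ p := h1
    _ ≤ 2 ^ p * (max K (ν * Mb)) ^ p := by rw [← h4]; exact h3
    _ ≤ 2 ^ p * (K ^ p + (ν * Mb) ^ p) :=
        mul_le_mul_of_nonneg_left h5 (Real.rpow_nonneg (by norm_num) p)
    _ ≤ 2 ^ p * K ^ p + 2 ^ p * ν ^ p * S := by rw [h6] at *; linarith
end
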